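/- H_3^n(α) ≥ h((1/3) ∗ α) + (1/3)·h(α) + 2/3 + (n−2)·h(α), where a ∗ b := a(1−b) + (1−a)b. -/

import Mathlib

/-!
Label the three codewords `x₀, x₁, x₂` so that at some coordinate `i` the word `x₀` is the
minority while `x₁ ≠ x₂`. By the chain rule the output entropy is at least the entropy of the
output bit at `i`, which is `h(1/3 ∗ α)`, plus the entropy of the remaining bits given the class
`{x₀}` or `{x₁, x₂}` of the input: conditioning on the clean input's class instead of the noisy
bit only lowers entropy, because the two are independent given the class. Given `x₀` the rest
carries `(n-1) h(α)`; given `{x₁, x₂}` the same argument at a coordinate where `x₁` and `x₂`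
differ yields `1 + (n-2) h(α)`, the output bit there being uniform.
-/

/-- Binary entropy function (in bits). -/
noncomputable def binEnt (a : ℝ) : ℝ :=
  -(a * Real.logb 2 a) - ((1 - a) * Real.logb 2 (1 - a))

/-- Binary convolution: `a ∗ b := a(1−b) + (1−a)b`. -/
noncomputable def convStar (a b : ℝ) : ℝ := a * (1 - b) + (1 - a) * b

/-- Shannon entropy (in bits) of a distribution `p` on a finite type. -/
noncomputable def ent {Ω : Type*} [Fintype Ω] (p : Ω → ℝ) : ℝ :=
  ∑ x, -(p x * Real.logb 2 (p x))

/-- The distribution of `U_S ⊕ Z^n`. -/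
noncomputable def bscOut {n : ℕ} (S : Finset (Fin n → Bool)) (α : ℝ)
    (y : Fin n → Bool) : ℝ :=
  (S.card : ℝ)⁻¹ * ∑ x ∈ S, ∏ i, (if y i = x i then 1 - α else α)

/-- `H_m^n(α)`. -/
noncomputable def Hmn (n m : ℕ) (α : ℝ) : ℝ :=
  sInf {h : ℝ | ∃ S : Finset (Fin n → Bool), S.card = m ∧ h = ent (bscOut S α)}

open Real

section Entropy

variable {Ω A B K : Type*} [Fintype Ω] [Fintype A] [Fintype B] [Fintype K]

lemma ent_eq_sum_negMulLog_div (p : Ω → ℝ) : ent p = (∑ x, negMulLog (p x)) / log 2 := by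
  simp only [ent, negMulLog, logb, Finset.sum_div]
  exact Finset.sum_congr rfl fun x _ => by ring

lemma ent_comp_equiv (e : Ω ≃ A) (p : A → ℝ) : ent (p ∘ e) = ent p :=
  e.sum_comp fun a => -(p a * logb 2 (p a))

lemma ent_prod (u : A → ℝ) (v : B → ℝ) (hu : ∑ a, u a = 1) (hv : ∑ b, v b = 1) :
    ent (fun ab : A × B => u ab.1 * v ab.2) = ent u + ent v := by
  simp only [ent_eq_sum_negMulLog_div, ← add_div, Fintype.sum_prod_type, negMulLog_mul,
    Finset.sum_add_distrib, ← Finset.sum_mul, ← Finset.mul_sum, hu, hv, one_mul]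

lemma sum_pi_prod_eq_one {ι β : Type*} [Fintype ι] [DecidableEq ι] [Fintype β]
    (p : ι → β → ℝ) (hp : ∀ i, ∑ b, p i b = 1) : ∑ y : ι → β, ∏ i, p i (y i) = 1 := by
  simp [← Fintype.prod_sum, hp]

lemma ent_pi {ι β : Type*} [Fintype ι] [DecidableEq ι] [Fintype β]
    (p : ι → β → ℝ) (hp : ∀ i, ∑ b, p i b = 1) :
    ent (fun y : ι → β => ∏ i, p i (y i)) = ∑ i, ent (p i) := by
  induction hn : Fintype.card ι generalizing ι with
  | zero =>
    have : IsEmpty ι := Fintype.card_eq_zero_iff.mp hn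
    simp [ent]
  | succ n ih =>
    obtain ⟨i⟩ : Nonempty ι := Fintype.card_pos_iff.mp (by omega)
    have hsplit : (fun y : ι → β => ∏ j, p j (y j)) =
        (fun z : β × ({j // j ≠ i} → β) => p i z.1 * ∏ j : {j // j ≠ i}, p j (z.2 j)) ∘
          Equiv.funSplitAt i β :=
      funext fun y => Fintype.prod_eq_mul_prod_subtype_ne _ i
    rw [hsplit, ent_comp_equiv,
      ent_prod (p i) (fun w : {j // j ≠ i} → β => ∏ j : {j // j ≠ i}, p j (w j)) (hp i)
        (sum_pi_prod_eq_one _ fun j => hp j),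
      ih (fun j : {j // j ≠ i} => p j) (fun j => hp j) (by simp [hn]),
      Fintype.sum_eq_add_sum_subtype_ne _ i]

lemma sum_mul_sum_negMulLog_le (w : K → ℝ) (g : K → B → ℝ) (hw : ∀ k, 0 ≤ w k)
    (hw1 : ∑ k, w k = 1) (hg : ∀ k b, 0 ≤ g k b) :
    ∑ k, w k * ∑ b, negMulLog (g k b) ≤ ∑ b, negMulLog (∑ k, w k * g k b) := by
  simp only [Finset.mul_sum]
  rw [Finset.sum_comm]
  refine Finset.sum_le_sum fun b _ => ?_
  simpa using concaveOn_negMulLog.le_map_sum (fun k _ => hw k) hw1 fun k _ => hg k b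

lemma negMulLog_sum_add_le (v : K → ℝ) (g : K → B → ℝ) (hv : ∀ k, 0 ≤ v k)
    (hg : ∀ k b, 0 ≤ g k b) (hg1 : ∀ k, ∑ b, g k b = 1) :
    negMulLog (∑ k, v k) + ∑ k, v k * ∑ b, negMulLog (g k b) ≤
      ∑ b, negMulLog (∑ k, v k * g k b) := by
  set m := ∑ k, v k
  obtain hm | hm := (Finset.sum_nonneg fun k _ => hv k : 0 ≤ m).eq_or_lt
  · have hv0 : ∀ k, v k = 0 := congrFun ((Fintype.sum_eq_zero_iff_of_nonneg hv).mp hm.symm)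
    simp [m, hv0]
  have hm0 : m ≠ 0 := hm.ne'
  set c : B → ℝ := fun b => ∑ k, v k / m * g k b
  have hc1 : ∑ b, c b = 1 := by
    rw [Finset.sum_comm]
    simp [← Finset.mul_sum, hg1, ← Finset.sum_div, m, hm0]
  have hvc : ∀ b, ∑ k, v k * g k b = m * c b := fun b => by
    simp only [c, Finset.mul_sum]
    exact Finset.sum_congr rfl fun k _ => by field_simp
  have hjensen := sum_mul_sum_negMulLog_le (fun k => v k / m) g
    (fun k => div_nonneg (hv k) hm.le) (by simp [← Finset.sum_div, m, hm0]) hg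
  calc negMulLog m + ∑ k, v k * ∑ b, negMulLog (g k b)
      = negMulLog m + m * ∑ k, v k / m * ∑ b, negMulLog (g k b) := by
        simp only [Finset.mul_sum]
        congr 1
        exact Finset.sum_congr rfl fun k _ => Finset.sum_congr rfl fun b _ => by field_simp
    _ ≤ negMulLog m + m * ∑ b, negMulLog (c b) := by gcongr
    _ = ∑ b, negMulLog (∑ k, v k * g k b) := by
        simp only [hvc, negMulLog_mul, Finset.sum_add_distrib, ← Finset.sum_mul,
          ← Finset.mul_sum, hc1, one_mul]

/-- The chain rule `H(A, B) ≥ H(A) + H(B | K)` for `A`, `B` independent given a latent label `K`: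
conditioning on `K` instead of `A` can only lower the entropy of `B`. -/
lemma ent_mixture_prod_ge (w : K → ℝ) (f : K → A → ℝ) (g : K → B → ℝ) (hw : ∀ k, 0 ≤ w k)
    (hf : ∀ k a, 0 ≤ f k a) (hg : ∀ k b, 0 ≤ g k b) (hf1 : ∀ k, ∑ a, f k a = 1)
    (hg1 : ∀ k, ∑ b, g k b = 1) :
    ent (fun a => ∑ k, w k * f k a) + ∑ k, w k * ent (g k) ≤
      ent (fun ab : A × B => ∑ k, w k * f k ab.1 * g k ab.2) := by
  have hrows : ∑ k, w k * ∑ b, negMulLog (g k b) =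
      ∑ a, ∑ k, w k * f k a * ∑ b, negMulLog (g k b) := by
    rw [Finset.sum_comm]
    refine Finset.sum_congr rfl fun k _ => ?_
    rw [← Finset.sum_mul, ← Finset.mul_sum, hf1, mul_one]
  have key : ∑ a, negMulLog (∑ k, w k * f k a) + ∑ k, w k * ∑ b, negMulLog (g k b) ≤
      ∑ a, ∑ b, negMulLog (∑ k, w k * f k a * g k b) := by
    rw [hrows, ← Finset.sum_add_distrib]
    exact Finset.sum_le_sum fun a _ =>
      negMulLog_sum_add_le _ g (fun k => mul_nonneg (hw k) (hf k a)) hg hg1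
  simp only [ent_eq_sum_negMulLog_div, ← mul_div_assoc, ← Finset.sum_div, ← add_div,
    Fintype.sum_prod_type]
  exact div_le_div_of_nonneg_right key (log_pos one_lt_two).le

lemma ent_splitAt_ge {ι β : Type*} [Fintype ι] [DecidableEq ι] [Fintype β] (i : ι)
    (w : K → ℝ) (f : K → β → ℝ) (g : K → ({j // j ≠ i} → β) → ℝ) (hw : ∀ k, 0 ≤ w k)
    (hf : ∀ k b, 0 ≤ f k b) (hg : ∀ k z, 0 ≤ g k z) (hf1 : ∀ k, ∑ b, f k b = 1)
    (hg1 : ∀ k, ∑ z, g k z = 1) :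
    ent (fun b => ∑ k, w k * f k b) + ∑ k, w k * ent (g k) ≤
      ent (fun y : ι → β => ∑ k, w k * f k (y i) * g k (Subtype.restrict (· ≠ i) y)) :=
  (ent_mixture_prod_ge w f g hw hf hg hf1 hg1).trans_eq
    (ent_comp_equiv (Equiv.funSplitAt i β) _).symm

end Entropy

lemma binEnt_one_sub (a : ℝ) : binEnt (1 - a) = binEnt a := by
  simp only [binEnt, sub_sub_cancel]
  ring

lemma binEnt_half : binEnt (1 / 2) = 1 := by
  rw [binEnt, show (1 : ℝ) - 1 / 2 = 1 / 2 by norm_num, one_div, logb_inv,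
    logb_self_eq_one one_lt_two]
  ring

lemma ent_bool (p : Bool → ℝ) (hp : p true + p false = 1) : ent p = binEnt (p true) := by
  rw [ent, Fintype.sum_bool, binEnt, ← hp, add_sub_cancel_left]
  ring

/-- `bsc α s b` is the probability that the binary symmetric channel with crossover `α` outputs
`b` on input `s`. -/
noncomputable def bsc (α : ℝ) (s b : Bool) : ℝ := if b = s then 1 - α else α

noncomputable def bscPi {ι : Type*} [Fintype ι] (α : ℝ) (x y : ι → Bool) : ℝ :=
  ∏ i, bsc α (x i) (y i)

section BSC

variable {ι : Type*} [Fintype ι] {α : ℝ}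

lemma bsc_nonneg (h0 : 0 ≤ α) (h1 : α ≤ 1) (s b : Bool) : 0 ≤ bsc α s b := by
  unfold bsc; split <;> linarith

lemma bsc_true_add_false (α : ℝ) (s : Bool) : bsc α s true + bsc α s false = 1 := by
  cases s <;> simp [bsc]

lemma sum_bsc (α : ℝ) (s : Bool) : ∑ b, bsc α s b = 1 := by
  rw [Fintype.sum_bool, bsc_true_add_false]

lemma bsc_add_bsc_not (α : ℝ) (s b : Bool) : bsc α s b + bsc α (!s) b = 1 := by
  cases s <;> cases b <;> simp [bsc]

lemma ent_bsc (α : ℝ) (s : Bool) : ent (bsc α s) = binEnt α := by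
  rw [ent_bool _ (bsc_true_add_false α s)]
  cases s <;> simp [bsc, binEnt_one_sub]

lemma bscPi_nonneg (h0 : 0 ≤ α) (h1 : α ≤ 1) (x y : ι → Bool) : 0 ≤ bscPi α x y :=
  Finset.prod_nonneg fun _ _ => bsc_nonneg h0 h1 _ _

variable [DecidableEq ι]

lemma sum_bscPi (α : ℝ) (x : ι → Bool) : ∑ y, bscPi α x y = 1 :=
  sum_pi_prod_eq_one _ fun i => sum_bsc α (x i)

lemma ent_bscPi (α : ℝ) (x : ι → Bool) : ent (bscPi α x) = Fintype.card ι * binEnt α := by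
  change ent (fun y : ι → Bool => ∏ i, bsc α (x i) (y i)) = _
  simp [ent_pi _ fun i => sum_bsc α (x i), ent_bsc]

lemma bscPi_splitAt (α : ℝ) (i : ι) (x y : ι → Bool) :
    bscPi α x y = bsc α (x i) (y i) *
      bscPi α (Subtype.restrict (· ≠ i) x) (Subtype.restrict (· ≠ i) y) :=
  Fintype.prod_eq_mul_prod_subtype_ne _ i

lemma natCast_card_subtype_ne (i : ι) :
    (Fintype.card {j // j ≠ i} : ℝ) = Fintype.card ι - 1 := by
  rw [Fintype.card_subtype_compl, Fintype.card_subtype_eq,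
    Nat.cast_sub (Fintype.card_pos_iff.mpr ⟨i⟩), Nat.cast_one]

end BSC

section Codewords

variable {ι : Type*} [Fintype ι] [DecidableEq ι] {α : ℝ}

lemma ent_bscPi_pair_ge (h0 : 0 ≤ α) (h1 : α ≤ 1) {x₁ x₂ : ι → Bool} (hx : x₁ ≠ x₂) :
    1 + (Fintype.card ι - 1) * binEnt α ≤
      ent (fun y => 2⁻¹ * (bscPi α x₁ y + bscPi α x₂ y)) := by
  obtain ⟨i, hi⟩ := Function.ne_iff.mp hx
  have hsplit := ent_splitAt_ge i (fun _ : Fin 2 => (2⁻¹ : ℝ)) ![bsc α (x₁ i), bsc α (x₂ i)]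
    ![bscPi α (Subtype.restrict (· ≠ i) x₁), bscPi α (Subtype.restrict (· ≠ i) x₂)]
    (fun _ => by norm_num) (by simp [Fin.forall_fin_two, bsc_nonneg h0 h1])
    (by simp [Fin.forall_fin_two, bscPi_nonneg h0 h1])
    (by simp [Fin.forall_fin_two, bsc_true_add_false])
    (by simp [Fin.forall_fin_two, sum_bscPi])
  have hunif : (fun b => ∑ k, 2⁻¹ * ![bsc α (x₁ i), bsc α (x₂ i)] k b) = fun _ => 1 / 2 := by
    funext b
    have := bsc_add_bsc_not α (x₁ i) b
    rw [Bool.eq_not_iff.mpr hi.symm, Fin.sum_univ_two]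
    simp only [Matrix.cons_val_zero, Matrix.cons_val_one]
    linarith
  rw [hunif, ent_bool _ (by norm_num), binEnt_half] at hsplit
  refine le_of_eq_of_le ?_ (hsplit.trans_eq ?_)
  · simp only [Fin.sum_univ_two, Matrix.cons_val_zero, Matrix.cons_val_one, ent_bscPi,
      natCast_card_subtype_ne]
    ring
  · congr 1
    funext y
    rw [bscPi_splitAt α i x₁ y, bscPi_splitAt α i x₂ y]
    simp only [Fin.sum_univ_two, Matrix.cons_val_zero, Matrix.cons_val_one]
    ring

lemma ent_bscPi_triple_ge (h0 : 0 ≤ α) (h1 : α ≤ 1) {x₀ x₁ x₂ : ι → Bool} {i : ι}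
    (h₀₁ : x₀ i ≠ x₁ i) (h₁₂ : x₁ i = x₂ i) (hx : x₁ ≠ x₂) :
    binEnt (convStar (1/3) α) + (1/3) * binEnt α + 2/3 + ((Fintype.card ι : ℝ) - 2) * binEnt α ≤
      ent (fun y => 3⁻¹ * (bscPi α x₀ y + bscPi α x₁ y + bscPi α x₂ y)) := by
  set r : (ι → Bool) → {j // j ≠ i} → Bool := Subtype.restrict (· ≠ i)
  have hr : r x₁ ≠ r x₂ := fun h => hx <| funext fun j => by
    by_cases hj : j = i
    · exact hj ▸ h₁₂
    · exact congrFun h ⟨j, hj⟩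
  have hsplit := ent_splitAt_ge i ![(1 / 3 : ℝ), 2 / 3] ![bsc α (x₀ i), bsc α (x₁ i)]
    ![bscPi α (r x₀), fun z => 2⁻¹ * (bscPi α (r x₁) z + bscPi α (r x₂) z)]
    (by norm_num [Fin.forall_fin_two]) (by simp [Fin.forall_fin_two, bsc_nonneg h0 h1])
    (by simp [Fin.forall_fin_two, bscPi_nonneg h0 h1, add_nonneg])
    (by simp [Fin.forall_fin_two, bsc_true_add_false])
    (by norm_num [Fin.forall_fin_two, sum_bscPi, Finset.sum_add_distrib, ← Finset.mul_sum])
  have hmarg : ent (fun b => ∑ k, ![(1 / 3 : ℝ), 2 / 3] k * ![bsc α (x₀ i), bsc α (x₁ i)] k b) =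
      binEnt (convStar (1 / 3) α) := by
    simp only [Fin.sum_univ_two, Matrix.cons_val_zero, Matrix.cons_val_one,
      Bool.eq_not_iff.mpr h₀₁]
    rw [ent_bool _ (by linarith [bsc_true_add_false α (x₁ i), bsc_true_add_false α (!x₁ i)])]
    cases x₁ i
    · congr 1
      simp only [bsc, convStar, Bool.not_false, if_true, Bool.true_eq_false, if_false]
      ring
    · rw [← binEnt_one_sub]
      congr 1
      simp only [bsc, convStar, Bool.not_true, if_true, Bool.true_eq_false, if_false]
      ring
  have hpair := ent_bscPi_pair_ge h0 h1 hr
  rw [natCast_card_subtype_ne] at hpair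
  rw [hmarg] at hsplit
  refine le_trans ?_ (hsplit.trans_eq ?_)
  · simp only [Fin.sum_univ_two, Matrix.cons_val_zero, Matrix.cons_val_one, ent_bscPi,
      natCast_card_subtype_ne]
    linarith
  · congr 1
    funext y
    rw [bscPi_splitAt α i x₀ y, bscPi_splitAt α i x₁ y, bscPi_splitAt α i x₂ y, ← h₁₂]
    simp only [Fin.sum_univ_two, Matrix.cons_val_zero, Matrix.cons_val_one]
    ring

end Codewords

lemma exists_minority_coord {ι : Type*} [DecidableEq (ι → Bool)] {S : Finset (ι → Bool)}
    (hS : S.card = 3) :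
    ∃ (x₀ x₁ x₂ : ι → Bool) (i : ι), S = {x₀, x₁, x₂} ∧ x₀ i ≠ x₁ i ∧ x₁ i = x₂ i ∧ x₁ ≠ x₂ := by
  obtain ⟨a, b, c, hab, hac, hbc, rfl⟩ := Finset.card_eq_three.mp hS
  obtain ⟨i, hi⟩ := Function.ne_iff.mp hab
  by_cases hca : c i = a i
  · exact ⟨b, a, c, i, Finset.insert_comm .., hi.symm, hca.symm, hac⟩
  · exact ⟨a, b, c, i, rfl, hi, (Bool.eq_not_iff.mpr hi.symm).trans
      (Bool.eq_not_iff.mpr hca).symm, hbc⟩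

theorem H3_lower_bound (n : ℕ) (hn : 2 ≤ n) (α : ℝ)
    (hα : α ∈ Set.Icc (0:ℝ) (1/2)) :
    binEnt (convStar (1/3) α) + (1/3) * binEnt α + 2/3 + ((n : ℝ) - 2) * binEnt α ≤
      Hmn n 3 α := by
  obtain ⟨h0, h1⟩ := hα
  refine le_csInf ?_ ?_
  · have hcard : 3 ≤ (Finset.univ : Finset (Fin n → Bool)).card := by
      simpa using (show 3 ≤ 2 ^ 2 by norm_num).trans (Nat.pow_le_pow_right two_pos hn)
    obtain ⟨S, -, hS⟩ := Finset.exists_subset_card_eq hcard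
    exact ⟨_, S, hS, rfl⟩
  · rintro _ ⟨S, hS, rfl⟩
    obtain ⟨x₀, x₁, x₂, i, rfl, h₀₁, h₁₂, hx⟩ := exists_minority_coord hS
    have hout : bscOut {x₀, x₁, x₂} α =
        fun y => 3⁻¹ * (bscPi α x₀ y + bscPi α x₁ y + bscPi α x₂ y) := by
      have hx₀ : x₀ ∉ ({x₁, x₂} : Finset _) := by
        simp only [Finset.mem_insert, Finset.mem_singleton, not_or]
        exact ⟨fun h => h₀₁ (congrFun h i), fun h => h₀₁ ((congrFun h i).trans h₁₂.symm)⟩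
      funext y
      rw [bscOut, hS, Finset.sum_insert hx₀, Finset.sum_pair hx, ← add_assoc]
      norm_num [bscPi, bsc]
    simpa [hout] using ent_bscPi_triple_ge h0 (by linarith) h₀₁ h₁₂ hx
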